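/- The digraph D_7 is a strong digraph of order 7 in which every vertex has out-degree 3 and in-degree 3 (so every vertex is a T-vertex with m = 3); D_7 contains a cycle of length 6, but D_7 contains no Hamiltonian cycle. -/

import Mathlib

/-!
Basic framework: finite loopless digraphs (arcs may exist in both directions),
degrees, adjacency, directed cycles (as injective maps from `ZMod k` respecting
arcs), strong and 2-strong connectivity, T-vertices, and the special digraphs
`D₅`, `D₇`, the classes `L₁`, `L₂`, etc. from the paper
"On Cycles through Vertices of Large Semidegree in Digraphs".
-/

/-- A digraph: a loopless arc relation (arcs `u → v`; both `uv` and `vu` allowed). -/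
structure Dgr (V : Type*) where
  Arc : V → V → Prop
  loopless : ∀ v, ¬ Arc v v

namespace Dgr

variable {V : Type*}

/-- Two vertices are adjacent if there is an arc between them in some direction. -/
def Adj (D : Dgr V) (u v : V) : Prop := D.Arc u v ∨ D.Arc v u

/-- Out-degree `d⁺(u)`. -/
noncomputable def outDeg (D : Dgr V) (u : V) : ℕ := {v | D.Arc u v}.ncard

/-- In-degree `d⁻(u)`. -/
noncomputable def inDeg (D : Dgr V) (u : V) : ℕ := {v | D.Arc v u}.ncard

/-- Degree `d(u) = d⁺(u) + d⁻(u)`. -/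
noncomputable def deg (D : Dgr V) (u : V) : ℕ := D.outDeg u + D.inDeg u

/-- `d⁺(u, A)`: number of out-neighbours of `u` in `A`. -/
noncomputable def outDegOn (D : Dgr V) (u : V) (A : Set V) : ℕ := {v ∈ A | D.Arc u v}.ncard

/-- `d⁻(u, A)`: number of in-neighbours of `u` in `A`. -/
noncomputable def inDegOn (D : Dgr V) (u : V) (A : Set V) : ℕ := {v ∈ A | D.Arc v u}.ncard

/-- `d(u, A) = d⁺(u, A) + d⁻(u, A)`. -/
noncomputable def degOn (D : Dgr V) (u : V) (A : Set V) : ℕ := D.outDegOn u A + D.inDegOn u A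

/-- In a digraph of order `2m+1`, a `T`-vertex is one with `d⁺(u) ≥ m` and `d⁻(u) ≥ m`. -/
def TVertex (D : Dgr V) (m : ℕ) (u : V) : Prop := m ≤ D.outDeg u ∧ m ≤ D.inDeg u

/-- A directed cycle of length `k ≥ 2`, given as an injective map `c : ZMod k → V`
with an arc from each `c i` to `c (i+1)`. -/
def IsCycle (D : Dgr V) {k : ℕ} (c : ZMod k → V) : Prop :=
  2 ≤ k ∧ Function.Injective c ∧ ∀ i, D.Arc (c i) (c (i + 1))

/-- `D` has a (directed) cycle through all vertices of `S`. -/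
def CycleThrough (D : Dgr V) (S : Set V) : Prop :=
  ∃ (k : ℕ) (c : ZMod k → V), D.IsCycle c ∧ S ⊆ Set.range c

/-- A Hamiltonian cycle: a cycle through all the vertices. -/
def Hamiltonian (D : Dgr V) [Fintype V] : Prop :=
  ∃ c : ZMod (Fintype.card V) → V, D.IsCycle c ∧ Function.Surjective c

/-- `D` is strong: a directed path (walk) from `u` to `v` for every pair of
distinct vertices. -/
def Strong (D : Dgr V) : Prop :=
  ∀ u v : V, u ≠ v → Relation.TransGen D.Arc u v

/-- The induced subdigraph on a set `S` of vertices. -/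
def restrict (D : Dgr V) (S : Set V) : Dgr S where
  Arc a b := D.Arc a b
  loopless v := D.loopless v

/-- `D` is 2-strong: at least 3 vertices, and deleting any single vertex leaves
a strong digraph. -/
def TwoStrong (D : Dgr V) [Fintype V] : Prop :=
  3 ≤ Fintype.card V ∧ ∀ w : V, (D.restrict {v | v ≠ w}).Strong

/-- Isomorphism of digraphs. -/
def Iso (D : Dgr V) {W : Type*} (E : Dgr W) : Prop :=
  ∃ e : V ≃ W, ∀ a b : V, D.Arc a b ↔ E.Arc (e a) (e b)

end Dgr

/-- A digraph defined by a list of arcs. -/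
def ofList {V : Type*} [DecidableEq V] (l : List (V × V)) (h : ∀ v : V, (v, v) ∉ l) :
    Dgr V where
  Arc a b := (a, b) ∈ l
  loopless v hv := h v hv

/-- Arcs of the digraph `D₅` (vertices `x₁,x₂,x₃ = 0,1,2`, `x = 3`, `y = 4`):
`N⁺(x₁)={x₂,y}`, `N⁺(x₂)={x₃,x}`, `N⁺(x₃)={x,y}`, `N⁺(x)={x₁,x₂}`, `N⁺(y)={x₁,x₃}`. -/
def D5arcs : List (Fin 5 × Fin 5) :=
  [(0,1),(0,4),(1,2),(1,3),(2,3),(2,4),(3,0),(3,1),(4,0),(4,2)]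

/-- The digraph `D₅`. -/
def D5 : Dgr (Fin 5) := ofList D5arcs (by decide)

/-- `L₁`: the three digraphs obtained from `D₅` by adding the arc `x₁x₃`, the arc
`x₃x₁`, or both. -/
def L1 : Set (Dgr (Fin 5)) :=
  {ofList ((0,2) :: D5arcs) (by decide),
   ofList ((2,0) :: D5arcs) (by decide),
   ofList ((0,2) :: (2,0) :: D5arcs) (by decide)}

/-- Arcs of the digraph `D₇` (vertices `x₁,…,x₅ = 0,…,4`, `x = 5`, `y = 6`):
`N⁺(x₁)={x₂,x₅,y}`, `N⁺(x₂)={x₃,x₄,y}`, `N⁺(x₃)={x₂,x₄,x}`, `N⁺(x₄)={x₃,x₅,x}`,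
`N⁺(x₅)={x₁,x,y}`, `N⁺(x)={x₁,x₂,x₃}`, `N⁺(y)={x₁,x₄,x₅}`. -/
def D7arcs : List (Fin 7 × Fin 7) :=
  [(0,1),(0,4),(0,6),(1,2),(1,3),(1,6),(2,1),(2,3),(2,5),(3,2),(3,4),(3,5),
   (4,0),(4,5),(4,6),(5,0),(5,1),(5,2),(6,0),(6,3),(6,4)]

/-- The digraph `D₇`. -/
def D7 : Dgr (Fin 7) := ofList D7arcs (by decide)

/-- Membership in the class `L₂`: there is an enumeration `x_1,…,x_{2m}, x` of the
vertices (here `b i = x_i`, indices mod `2m`, so `b 0 = x_{2m}`) such that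
`x_1x_2⋯x_{2m}x_1` is a cycle, `x` and `x_{2m}` are nonadjacent,
`N⁺(x) = N⁺(x_{2m}) = {x_1,…,x_m}`, `N⁻(x) = N⁻(x_{2m}) = {x_m,…,x_{2m-1}}`,
and there is no arc from `{x_1,…,x_{m-1}}` to `{x_{m+1},…,x_{2m-1}}`. -/
def InL2 {V : Type*} (D : Dgr V) (m : ℕ) : Prop :=
  ∃ (b : ZMod (2 * m) → V) (x : V),
    1 ≤ m ∧
    Function.Injective b ∧ x ∉ Set.range b ∧
    (∀ i, D.Arc (b i) (b (i + 1))) ∧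
    ¬ D.Adj x (b 0) ∧
    {v | D.Arc x v} = (fun i : ℕ => b i) '' Set.Icc 1 m ∧
    {v | D.Arc (b 0) v} = (fun i : ℕ => b i) '' Set.Icc 1 m ∧
    {v | D.Arc v x} = (fun i : ℕ => b i) '' Set.Icc m (2 * m - 1) ∧
    {v | D.Arc v (b 0)} = (fun i : ℕ => b i) '' Set.Icc m (2 * m - 1) ∧
    (∀ i ∈ Set.Icc 1 (m - 1), ∀ j ∈ Set.Icc (m + 1) (2 * m - 1),
      ¬ D.Arc (b (i : ℕ)) (b (j : ℕ)))

/-- `K*_{m,m+1} ⊆ D ⊆ [K_m + K̄_{m+1}]*` (containments as spanning subdigraphs):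
the vertex set splits into `A` of size `m` and its complement of size `m+1`, all arcs
between `A` and `Aᶜ` are present in both directions, and there are no arcs inside `Aᶜ`. -/
def KSandwich {V : Type*} (D : Dgr V) (m : ℕ) : Prop :=
  ∃ A : Set V, A.ncard = m ∧ Aᶜ.ncard = m + 1 ∧
    (∀ a ∈ A, ∀ b ∈ Aᶜ, D.Arc a b ∧ D.Arc b a) ∧
    (∀ u ∈ Aᶜ, ∀ v ∈ Aᶜ, ¬ D.Arc u v)

/-- Alternative (iv) of Theorem 2: `D` has a cycle `C = z_1 z_2 ⋯ z_{2m} z_1` of length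
`2m` such that, with `z` the vertex off the cycle, at least `3` vertices of the cycle
are nonadjacent to `z`, and every cycle vertex `z_l` nonadjacent to `z` satisfies
`z_{l-1}z, z z_{l+1} ∈ A(D)`, `N⁺(z) = N⁺(z_l)` and `N⁻(z) = N⁻(z_l)`; in particular
these vertices together with `z` form an independent set. -/
def PropIV {V : Type*} (D : Dgr V) (m : ℕ) : Prop :=
  ∃ (c : ZMod (2 * m) → V) (z : V),
    D.IsCycle c ∧ z ∉ Set.range c ∧
    3 ≤ {i : ZMod (2 * m) | ¬ D.Adj z (c i)}.ncard ∧
    (∀ i : ZMod (2 * m), ¬ D.Adj z (c i) →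
      D.Arc (c (i - 1)) z ∧ D.Arc z (c (i + 1)) ∧
      {v | D.Arc z v} = {v | D.Arc (c i) v} ∧
      {v | D.Arc v z} = {v | D.Arc v (c i)}) ∧
    (insert z (c '' {i | ¬ D.Adj z (c i)})).Pairwise (fun a b => ¬ D.Adj a b)

/-!
`D₇` is strong because `x₁x₂x₃x₄x₅x x₁` is a `6`-cycle and `y` is attached to it by the arcs
`x₁y` and `yx₁`. A Hamiltonian cycle, read from `x₁`, would be a path through the six other
vertices that returns to `x₁`; a depth-first search over such paths, evaluated by `decide`,
finds none.
-/

namespace Dgr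

variable {V : Type*}

section Degrees

variable [Fintype V] (D : Dgr V) [DecidableRel D.Arc]

theorem outDeg_eq_card_filter (u : V) : D.outDeg u = (Finset.univ.filter (D.Arc u)).card := by
  rw [outDeg, ← Set.ncard_coe_finset, Finset.coe_filter_univ]

theorem inDeg_eq_card_filter (u : V) : D.inDeg u = (Finset.univ.filter (D.Arc · u)).card := by
  rw [inDeg, ← Set.ncard_coe_finset, Finset.coe_filter_univ]

end Degrees

section Strong

variable {D : Dgr V}

theorem strong_of_reflTransGen (h : ∀ u v, Relation.ReflTransGen D.Arc u v) : D.Strong :=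
  fun u v huv => ((Relation.reflTransGen_iff_eq_or_transGen.mp (h u v)).resolve_left huv.symm)

theorem IsCycle.reflTransGen_add {k : ℕ} {c : ZMod k → V} (hc : D.IsCycle c) (i : ZMod k) :
    ∀ t : ℕ, Relation.ReflTransGen D.Arc (c i) (c (i + t))
  | 0 => by simpa using Relation.ReflTransGen.refl
  | t + 1 => by
    simpa [add_assoc] using (hc.reflTransGen_add i t).tail (hc.2.2 (i + t))

theorem IsCycle.reflTransGen {k : ℕ} {c : ZMod k → V} (hc : D.IsCycle c) (i j : ZMod k) :
    Relation.ReflTransGen D.Arc (c i) (c j) := by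
  have : NeZero k := ⟨by have := hc.1; omega⟩
  simpa using hc.reflTransGen_add i (j - i).val

theorem strong_of_isCycle {k : ℕ} {c : ZMod k → V} (hc : D.IsCycle c)
    (hoff : ∀ v, v ∉ Set.range c → (∃ i, D.Arc (c i) v) ∧ ∃ j, D.Arc v (c j)) : D.Strong := by
  have from_cycle : ∀ i v, Relation.ReflTransGen D.Arc (c i) v := by
    intro i v
    by_cases hv : v ∈ Set.range c
    · obtain ⟨j, rfl⟩ := hv
      exact hc.reflTransGen i j
    · obtain ⟨j, hj⟩ := (hoff v hv).1
      exact (hc.reflTransGen i j).tail hj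
  refine strong_of_reflTransGen fun u v => ?_
  by_cases hu : u ∈ Set.range c
  · obtain ⟨i, rfl⟩ := hu
    exact from_cycle i v
  · obtain ⟨j, hj⟩ := (hoff u hu).2
    exact .head hj (from_cycle j v)

end Strong

section Search

/-- There is no path `v = p₀ → p₁ → ⋯ → pₙ → r` whose inner vertices `p₁, …, pₙ` are distinct
and avoid `vis`; stated as a depth-first search, so that it is decidable by evaluation. -/
def NoClosingPath (D : Dgr V) (r : V) : ℕ → V → List V → Prop
  | 0, v, _ => ¬ D.Arc v r
  | n + 1, v, vis => ∀ w, D.Arc v w → w ∈ vis ∨ D.NoClosingPath r n w (w :: vis)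

instance decidableNoClosingPath [Fintype V] [DecidableEq V] (D : Dgr V) [DecidableRel D.Arc]
    (r : V) : ∀ n v vis, Decidable (D.NoClosingPath r n v vis)
  | 0, v, _ => inferInstanceAs (Decidable ¬ D.Arc v r)
  | n + 1, v, vis =>
    have := fun w vis' => decidableNoClosingPath D r n w vis'
    inferInstanceAs (Decidable (∀ w, D.Arc v w → w ∈ vis ∨ D.NoClosingPath r n w (w :: vis)))

variable {D : Dgr V} {r : V}

theorem NoClosingPath.false {n : ℕ} {v : V} {vis : List V} (h : D.NoClosingPath r n v vis)
    (p : ℕ → V) (hp0 : p 0 = v) (harc : ∀ i < n, D.Arc (p i) (p (i + 1))) (hlast : D.Arc (p n) r)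
    (hvis : ∀ i, 1 ≤ i → i ≤ n → p i ∉ vis)
    (hinj : ∀ i j, 1 ≤ i → i < j → j ≤ n → p i ≠ p j) : False := by
  induction n generalizing v vis p with
  | zero => exact h (hp0 ▸ hlast)
  | succ n ih =>
    rcases h (p 1) (hp0 ▸ harc 0 (by omega)) with hmem | hrest
    · exact hvis 1 le_rfl (by omega) hmem
    refine ih hrest (fun i => p (i + 1)) rfl (fun i hi => harc (i + 1) (by omega)) hlast ?_
      (fun i j hi hij hj => hinj (i + 1) (j + 1) (by omega) (by omega) (by omega))
    intro i hi hin hmem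
    rcases List.mem_cons.mp hmem with heq | hmem
    · exact hinj 1 (i + 1) le_rfl (by omega) (by omega) heq.symm
    · exact hvis (i + 1) (by omega) (by omega) hmem

theorem not_hamiltonian_of_noClosingPath [Fintype V] {n : ℕ} (hcard : Fintype.card V = n + 1)
    (h : D.NoClosingPath r n r [r]) : ¬ D.Hamiltonian := by
  rintro ⟨c, ⟨-, hinj, harc⟩, hsurj⟩
  generalize Fintype.card V = N at c hinj harc hsurj hcard
  subst hcard
  obtain ⟨j, rfl⟩ := hsurj r
  have cast_ne : ∀ i k : ℕ, i < k → k ≤ n → ((i : ZMod (n + 1)) ≠ k) := by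
    intro i k hik hk heq
    rw [ZMod.natCast_eq_natCast_iff', Nat.mod_eq_of_lt (by omega), Nat.mod_eq_of_lt (by omega)]
      at heq
    omega
  refine h.false (fun i => c (j + i)) (by simp) (fun i _ => by simpa [add_assoc] using harc (j + i))
    (by simpa [add_assoc] using harc (j + n)) ?_ ?_
  · intro i hi hin hmem
    have := cast_ne 0 i hi hin
    simp_all [hinj.eq_iff]
  · intro i k hi hik hk heq
    exact cast_ne i k hik hk (add_left_cancel (hinj heq))

end Search

end Dgr

instance : DecidableRel D7.Arc := fun a b => inferInstanceAs (Decidable ((a, b) ∈ D7arcs))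

def D7sixCycle : ZMod 6 → Fin 7 := ![0, 1, 2, 3, 4, 5]

theorem D7_isCycle_sixCycle : D7.IsCycle D7sixCycle :=
  ⟨by norm_num, by decide, by decide⟩

theorem D7_strong : D7.Strong :=
  Dgr.strong_of_isCycle D7_isCycle_sixCycle fun v hv => by
    obtain rfl : v = 6 := by
      contrapose! hv
      exact ⟨(v : ℕ), by fin_cases v <;> first | rfl | exact absurd rfl hv⟩
    exact ⟨⟨0, by decide⟩, 0, by decide⟩

theorem D7_outDeg (v : Fin 7) : D7.outDeg v = 3 := by
  rw [Dgr.outDeg_eq_card_filter]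
  revert v
  decide

theorem D7_inDeg (v : Fin 7) : D7.inDeg v = 3 := by
  rw [Dgr.inDeg_eq_card_filter]
  revert v
  decide

theorem D7_not_hamiltonian : ¬ D7.Hamiltonian :=
  Dgr.not_hamiltonian_of_noClosingPath (r := 0) (n := 6) rfl (by decide)

/-- The digraph `D₇` is a strong digraph of order `7` in which every vertex has
out-degree `3` and in-degree `3` (so every vertex is a `T`-vertex with `m = 3`);
it contains a cycle of length `6` but no Hamiltonian cycle. -/
theorem statement15 :
    D7.Strong ∧ Fintype.card (Fin 7) = 7 ∧
    (∀ v : Fin 7, D7.outDeg v = 3 ∧ D7.inDeg v = 3) ∧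
    (∀ v : Fin 7, D7.TVertex 3 v) ∧
    (∃ c : ZMod 6 → Fin 7, D7.IsCycle c) ∧
    ¬ D7.Hamiltonian :=
  ⟨D7_strong, Fintype.card_fin 7, fun v => ⟨D7_outDeg v, D7_inDeg v⟩,
    fun v => ⟨(D7_outDeg v).ge, (D7_inDeg v).ge⟩, ⟨D7sixCycle, D7_isCycle_sixCycle⟩,
    D7_not_hamiltonian⟩
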